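/- For every LP^MLN program 𝔽 over 𝒫 and every interpretation X, X is a soft stable model of 𝔽 if and only if ⟨X, X⟩ is a soft equilibrium model of 𝔽. -/

import Mathlib

namespace LPMLN

/-- Propositional formulas over a set of atoms `P`, built from atoms and `⊥`
using `∧`, `∨`, `→`. -/
inductive Formula (P : Type) : Type where
  | atom : P → Formula P
  | bot  : Formula P
  | and  : Formula P → Formula P → Formula P
  | or   : Formula P → Formula P → Formula P
  | imp  : Formula P → Formula P → Formula P
deriving DecidableEq

variable {P : Type} [DecidableEq P]

/-- `¬F` abbreviates `F → ⊥`. -/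
def Formula.neg (F : Formula P) : Formula P := .imp F .bot

/-- Classical evaluation of a formula in an interpretation `X ⊆ P`. -/
def Formula.eval (X : Finset P) : Formula P → Bool
  | .atom p => decide (p ∈ X)
  | .bot => false
  | .and F G => F.eval X && G.eval X
  | .or F G => F.eval X || G.eval X
  | .imp F G => !(F.eval X) || G.eval X

/-- Classical satisfaction `X ⊨ F`. -/
def Formula.sat (X : Finset P) (F : Formula P) : Prop := F.eval X = true

/-- The reduct `F^X`: every maximal subformula not satisfied by `X` is replaced by `⊥`. -/
def Formula.reduct (X : Finset P) : Formula P → Formula P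
  | .atom p => if p ∈ X then .atom p else .bot
  | .bot => .bot
  | .and F G => if (Formula.and F G).eval X then .and (F.reduct X) (G.reduct X) else .bot
  | .or F G => if (Formula.or F G).eval X then .or (F.reduct X) (G.reduct X) else .bot
  | .imp F G => if (Formula.imp F G).eval X then .imp (F.reduct X) (G.reduct X) else .bot

/-- `X` satisfies a (finite) set of formulas. -/
def satSet (X : Finset P) (Γ : Finset (Formula P)) : Prop := ∀ F ∈ Γ, F.sat X

/-- The reduct `Γ^X` of a finite set of formulas. -/
def reductSet (X : Finset P) (Γ : Finset (Formula P)) : Finset (Formula P) :=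
  Γ.image (Formula.reduct X)

/-- `X` is a stable model of `Γ` if `X ⊨ Γ^X` and no proper subset of `X` satisfies `Γ^X`. -/
def StableModel (Γ : Finset (Formula P)) (X : Finset P) : Prop :=
  satSet X (reductSet X Γ) ∧ ∀ Y, Y ⊂ X → ¬ satSet Y (reductSet X Γ)

/-- A weight is a real number (soft) or the symbol `α` (hard). -/
inductive Weight : Type where
  | soft : ℝ → Weight
  | hard : Weight

noncomputable instance : DecidableEq Weight := Classical.decEq _

/-- An LP^MLN program: a finite set of weighted formulas `w : R`. -/
abbrev Program (P : Type) [DecidableEq P] := Finset (Weight × Formula P)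

/-- `𝔽_X`: the weighted formulas of `𝔽` whose formula is satisfied by `X`. -/
noncomputable def progSat (𝔽 : Program P) (X : Finset P) : Program P :=
  𝔽.filter (fun r => r.2.eval X = true)

/-- `𝔽̄`: the formulas of `𝔽`, with weights dropped. -/
noncomputable def formulas (𝔽 : Program P) : Finset (Formula P) := 𝔽.image Prod.snd

/-- `X` is a soft stable model of `𝔽` (i.e. `X ∈ SM[𝔽]`) if `X` is a stable model of `𝔽̄_X`. -/
def SoftStable (𝔽 : Program P) (X : Finset P) : Prop :=
  StableModel (formulas (progSat 𝔽 X)) X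

/-- w-expressions: either zero or a formal expression `e^{c₁ + c₂·α}` with `c₁ : ℝ`, `c₂ : ℤ`. -/
inductive WExpr : Type where
  | zero : WExpr
  | exp : ℝ → ℤ → WExpr

/-- Multiplication of w-expressions: add exponents componentwise; zero is absorbing. -/
def WExpr.mul : WExpr → WExpr → WExpr
  | .zero, _ => .zero
  | _, .zero => .zero
  | .exp a b, .exp c d => .exp (a + c) (b + d)

/-- Inverse of a w-expression: negate both exponents. -/
def WExpr.inv : WExpr → WExpr
  | .zero => .zero
  | .exp a b => .exp (-a) (-b)

/-- Evaluation of a w-expression at a real number `a`. -/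
noncomputable def WExpr.eval (a : ℝ) : WExpr → ℝ
  | .zero => 0
  | .exp c₁ c₂ => Real.exp (c₁ + c₂ * a)

/-- The real contribution of a weight (hard rules contribute `0` to the soft sum). -/
def softWeight : Weight → ℝ
  | .soft r => r
  | .hard => 0

/-- Sum of the weights of the soft rules of `𝔽`. -/
noncomputable def softSum (𝔽 : Program P) : ℝ := ∑ r ∈ 𝔽, softWeight r.1

/-- The number of hard rules of `𝔽`. -/
noncomputable def hardCount (𝔽 : Program P) : ℤ :=
  ((𝔽.filter (fun r => r.1 = Weight.hard)).card : ℤ)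

/-- `TW(𝔽) = e^{c₁ + c₂·α}` where `c₁` is the sum of the soft weights and
`c₂` the number of hard rules. -/
noncomputable def TW (𝔽 : Program P) : WExpr := .exp (softSum 𝔽) (hardCount 𝔽)

open Classical in
/-- `W_𝔽(X) = TW(𝔽_X)` if `X ∈ SM[𝔽]`, and zero otherwise. -/
noncomputable def W (𝔽 : Program P) (X : Finset P) : WExpr :=
  if SoftStable 𝔽 X then TW (progSat 𝔽 X) else .zero

open Classical in
/-- `W^pnt_𝔽(X) = TW(𝔽 \ 𝔽_X)⁻¹` if `X ∈ SM[𝔽]`, and zero otherwise. -/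
noncomputable def Wpnt (𝔽 : Program P) (X : Finset P) : WExpr :=
  if SoftStable 𝔽 X then (TW (𝔽 \ progSat 𝔽 X)).inv else .zero

/-- `P_𝔽(X)`: the limit as `a → ∞` of the normalized evaluation of `W_𝔽(X)`. -/
noncomputable def Pr [Fintype P] (𝔽 : Program P) (X : Finset P) : ℝ :=
  Filter.limUnder Filter.atTop
    (fun a : ℝ => (W 𝔽 X).eval a / ∑ Y : Finset P, (W 𝔽 Y).eval a)

/-- `P^pnt_𝔽(X)`: the limit as `a → ∞` of the normalized evaluation of `W^pnt_𝔽(X)`. -/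
noncomputable def PrPnt [Fintype P] (𝔽 : Program P) (X : Finset P) : ℝ :=
  Filter.limUnder Filter.atTop
    (fun a : ℝ => (Wpnt 𝔽 X).eval a / ∑ Y : Finset P, (Wpnt 𝔽 Y).eval a)

/-- Weak equivalence: the same probability distribution. -/
def WeakEquiv [Fintype P] (𝔽 𝔾 : Program P) : Prop :=
  ∀ X : Finset P, Pr 𝔽 X = Pr 𝔾 X

/-- Strong equivalence of LP^MLN programs. -/
def StrongEquiv [Fintype P] (𝔽 𝔾 : Program P) : Prop :=
  ∀ (ℍ : Program P) (X : Finset P), Pr (𝔽 ∪ ℍ) X = Pr (𝔾 ∪ ℍ) X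

/-- Structural equivalence of LP^MLN programs. -/
def StructEquiv (𝔽 𝔾 : Program P) : Prop :=
  ∀ (ℍ : Program P) (X : Finset P), SoftStable (𝔽 ∪ ℍ) X ↔ SoftStable (𝔾 ∪ ℍ) X

/-- HT satisfaction `⟨Y,X⟩ ⊨ₕₜ F` (at the world "here"). -/
def htSat (Y X : Finset P) : Formula P → Prop
  | .atom p => p ∈ Y
  | .bot => False
  | .and F G => htSat Y X F ∧ htSat Y X G
  | .or F G => htSat Y X F ∨ htSat Y X G
  | .imp F G => (htSat Y X F → htSat Y X G) ∧ (Formula.imp F G).sat X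

/-- `⟨Y,X⟩` is an HT model of a set `Γ` of formulas. -/
def HTModel (Γ : Finset (Formula P)) (Y X : Finset P) : Prop :=
  Y ⊆ X ∧ ∀ F ∈ Γ, htSat Y X F

/-- `⟨Y,X⟩` is a soft HT model of an LP^MLN program `𝔽`. -/
def SoftHT (𝔽 : Program P) (Y X : Finset P) : Prop :=
  Y ⊆ X ∧ ∀ r ∈ progSat 𝔽 X, htSat Y X r.2

/-- The choice formula `{F}^ch = F ∨ ¬F`. -/
def Formula.ch (F : Formula P) : Formula P := .or F F.neg

/-- `{Γ}^ch`, choice formulas of a set of formulas. -/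
def chSet (Γ : Finset (Formula P)) : Finset (Formula P) := Γ.image Formula.ch

/-- Renaming of atoms. -/
def Formula.rename {Q : Type} (f : P → Q) : Formula P → Formula Q
  | .atom p => .atom (f p)
  | .bot => .bot
  | .and F G => .and (F.rename f) (G.rename f)
  | .or F G => .or (F.rename f) (G.rename f)
  | .imp F G => .imp (F.rename f) (G.rename f)

/-- `Δ_{𝒫'}(F)`, a formula over `𝒫 ∪ 𝒫'`; unprimed atoms are `Sum.inl p`,
primed atoms `p'` are `Sum.inr p`. -/
def Formula.delta : Formula P → Formula (P ⊕ P)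
  | .atom p => .atom (Sum.inr p)
  | .bot => .bot
  | .and F G => .and F.delta G.delta
  | .or F G => .or F.delta G.delta
  | .imp F G => .and (.imp F.delta G.delta)
      (.imp (F.rename Sum.inl) (G.rename Sum.inl))

/-- `Δ_{𝒫'}(Γ)` for a set of formulas. -/
def deltaSet (Γ : Finset (Formula P)) : Finset (Formula (P ⊕ P)) :=
  Γ.image Formula.delta

/-- The interpretation `Y' ∪ X` of `𝒫 ∪ 𝒫'`. -/
def primedInterp (Y X : Finset P) : Finset (P ⊕ P) :=
  X.image Sum.inl ∪ Y.image Sum.inr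


/-! The reduct `F^X` is built so that, for `Y ⊆ X`, `Y ⊨ F^X` holds exactly when
`⟨Y, X⟩ ⊨ₕₜ F`. Hence `X` is a minimal model of `Γ^X` iff `X ⊨ Γ` and no `⟨Y, X⟩` with
`Y ⊂ X` is an HT model of `Γ` (stable models are equilibrium models). For a program `𝔽`,
`X` satisfies `𝔽̄_X` by construction, and HT models of `𝔽̄_X` are the soft HT models of `𝔽`. -/

namespace Formula

variable {X : Finset P} {F G : Formula P}

@[simp] theorem sat_atom {p : P} : (atom p).sat X ↔ p ∈ X := by simp [sat, eval]

@[simp] theorem not_sat_bot : ¬ (bot : Formula P).sat X := by simp [sat, eval]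

@[simp] theorem sat_and : (F.and G).sat X ↔ F.sat X ∧ G.sat X := by simp [sat, eval]

@[simp] theorem sat_or : (F.or G).sat X ↔ F.sat X ∨ G.sat X := by simp [sat, eval]

@[simp] theorem sat_imp : (F.imp G).sat X ↔ (F.sat X → G.sat X) := by
  cases h : F.eval X <;> simp [sat, eval, h]

end Formula

theorem sat_of_htSat {Y X : Finset P} (h : Y ⊆ X) {F : Formula P} (hF : htSat Y X F) :
    F.sat X := by
  induction F with
  | atom p => exact Formula.sat_atom.mpr (h hF)
  | bot => exact hF.elim
  | and F G ihF ihG => exact Formula.sat_and.mpr ⟨ihF hF.1, ihG hF.2⟩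
  | or F G ihF ihG => exact Formula.sat_or.mpr (hF.imp ihF ihG)
  | imp F G => exact hF.2

theorem htSat_self_iff {X : Finset P} {F : Formula P} : htSat X X F ↔ F.sat X := by
  induction F <;> simp_all [htSat]

theorem sat_reduct_iff_htSat {Y X : Finset P} (h : Y ⊆ X) {F : Formula P} :
    (F.reduct X).sat Y ↔ htSat Y X F := by
  induction F with
  | atom p =>
    by_cases hp : p ∈ X
    · simp [Formula.reduct, hp, htSat]
    · simpa [Formula.reduct, hp, htSat] using fun hY => hp (h hY)
  | bot => simp [Formula.reduct, htSat]
  | and F G ihF ihG | or F G ihF ihG | imp F G ihF ihG =>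
    unfold Formula.reduct
    split_ifs with hX
    · replace hX : Formula.sat X _ := hX
      simp_all [htSat]
    · exact iff_of_false Formula.not_sat_bot fun hF => hX (sat_of_htSat h hF)

theorem satSet_reductSet_iff_htModel {Γ : Finset (Formula P)} {Y X : Finset P} (h : Y ⊆ X) :
    satSet Y (reductSet X Γ) ↔ HTModel Γ Y X := by
  simp [satSet, reductSet, HTModel, h, sat_reduct_iff_htSat h]

theorem satSet_reductSet_self_iff {Γ : Finset (Formula P)} {X : Finset P} :
    satSet X (reductSet X Γ) ↔ satSet X Γ := by
  rw [satSet_reductSet_iff_htModel subset_rfl]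
  simp [HTModel, satSet, htSat_self_iff]

theorem stableModel_iff_equilibrium {Γ : Finset (Formula P)} {X : Finset P} :
    StableModel Γ X ↔ satSet X Γ ∧ ∀ Y, Y ⊂ X → ¬ HTModel Γ Y X := by
  unfold StableModel
  rw [satSet_reductSet_self_iff]
  refine and_congr_right fun _ => forall₂_congr fun Y hY => ?_
  rw [satSet_reductSet_iff_htModel hY.subset]

theorem satSet_formulas_progSat (𝔽 : Program P) (X : Finset P) :
    satSet X (formulas (progSat 𝔽 X)) := by
  simp [satSet, formulas, progSat, Formula.sat]

theorem htModel_formulas_progSat_iff {𝔽 : Program P} {Y X : Finset P} :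
    HTModel (formulas (progSat 𝔽 X)) Y X ↔ SoftHT 𝔽 Y X := by
  simp only [HTModel, SoftHT, formulas, Finset.forall_mem_image]

/-- `X` is a soft stable model of `𝔽` iff `⟨X,X⟩` is a soft equilibrium
model of `𝔽`, i.e. no proper subset `Y` of `X` gives a soft HT model `⟨Y,X⟩`. -/
theorem stmt15 {P : Type} [DecidableEq P] (𝔽 : Program P) (X : Finset P) :
    SoftStable 𝔽 X ↔ ∀ Y : Finset P, Y ⊂ X → ¬ SoftHT 𝔽 Y X := by
  simp only [SoftStable, stableModel_iff_equilibrium, htModel_formulas_progSat_iff,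
    satSet_formulas_progSat, true_and]

end LPMLN
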